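/- Let P be a ground normal logic program. If P has two distinct stable models A_1 and A_2, then the dependence graph of P has a positive cycle C such that for every vertex v on C, the truth values of v in A_1 and A_2 differ (i.e., exactly one of A_1, A_2 contains v). -/

import Mathlib

/-!
If `A v ≠ B v`, say `A v = true`, then `v` is the head of a rule whose body holds in `A` but
fails in `B`, so some body atom `u` also has `A u ≠ B u`; it is a positive body atom exactly when
`A u = A v`. Following such arcs backwards through the finitely many atoms where `A` and `B`
differ closes a cycle, and since its negative arcs are exactly those that flip the value of `A`,
there are evenly many of them.
-/

/-- A rule of a ground normal logic program. -/
structure Rule (V : Type*) where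
  head : V
  pbody : Finset V
  nbody : Finset V
deriving DecidableEq

variable {V : Type*} [DecidableEq V] [Fintype V]

/-- The body formula of a rule holds in state `x`. -/
def bodySat (r : Rule V) (x : V → Bool) : Prop :=
  (∀ p ∈ r.pbody, x p = true) ∧ (∀ p ∈ r.nbody, x p = false)

instance (r : Rule V) (x : V → Bool) : Decidable (bodySat r x) := by
  unfold bodySat; infer_instance

/-- The Boolean network encoding of a logic program. -/
def enc (P : Finset (Rule V)) (v : V) (x : V → Bool) : Bool :=
  decide (∃ r ∈ P, r.head = v ∧ bodySat r x)

/-- Positive arc of the dependence graph. -/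
def posDG (P : Finset (Rule V)) (u v : V) : Prop :=
  ∃ r ∈ P, r.head = v ∧ u ∈ r.pbody

/-- Negative arc of the dependence graph. -/
def negDG (P : Finset (Rule V)) (u v : V) : Prop :=
  ∃ r ∈ P, r.head = v ∧ u ∈ r.nbody

/-- Positive arc of the influence graph of a Boolean network. -/
def posIG (f : V → (V → Bool) → Bool) (u v : V) : Prop :=
  ∃ x : V → Bool, f v (Function.update x u false) = false ∧ f v (Function.update x u true) = true

/-- Negative arc of the influence graph of a Boolean network. -/
def negIG (f : V → (V → Bool) → Bool) (u v : V) : Prop :=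
  ∃ x : V → Bool, f v (Function.update x u false) = true ∧ f v (Function.update x u true) = false

/-- `y` is a Herbrand model of the reduct of `P` with respect to `x`. -/
def modelsReduct (P : Finset (Rule V)) (x y : V → Bool) : Prop :=
  ∀ r ∈ P, (∀ p ∈ r.nbody, x p = false) → (∀ p ∈ r.pbody, y p = true) → y r.head = true

/-- `x` is a stable model of `P`: it is the least Herbrand model of the reduct `P^x`. -/
def isStable (P : Finset (Rule V)) (x : V → Bool) : Prop :=
  modelsReduct P x x ∧ ∀ y : V → Bool, modelsReduct P x y → ∀ v, x v = true → y v = true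

/-- Signed directed walks: `SWalk pos neg u v s n` means there is a directed walk of
length `n` from `u` to `v` whose parity of negative arcs is `s` (`true` = odd). -/
inductive SWalk {V : Type*} (pos neg : V → V → Prop) : V → V → Bool → ℕ → Prop where
  | nil (u : V) : SWalk pos neg u u false 0
  | consPos {u v w : V} {s : Bool} {n : ℕ} :
      pos u v → SWalk pos neg v w s n → SWalk pos neg u w s (n + 1)
  | consNeg {u v w : V} {s : Bool} {n : ℕ} :
      neg u v → SWalk pos neg v w s n → SWalk pos neg u w (!s) (n + 1)

theorem SWalk.mono {α : Type*} {pos neg pos' neg' : α → α → Prop}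
    (hpos : ∀ a b, pos a b → pos' a b) (hneg : ∀ a b, neg a b → neg' a b)
    {u w : α} {s : Bool} {n : ℕ} (h : SWalk pos neg u w s n) : SWalk pos' neg' u w s n := by
  induction h with
  | nil u => exact .nil u
  | consPos huv _ ih => exact .consPos (hpos _ _ huv) ih
  | consNeg huv _ ih => exact .consNeg (hneg _ _ huv) ih

theorem SWalk.sign_eq_xor {α : Type*} {pos neg : α → α → Prop} (c : α → Bool)
    (hpos : ∀ a b, pos a b → c a = c b) (hneg : ∀ a b, neg a b → c a ≠ c b)
    {u w : α} {s : Bool} {n : ℕ} (h : SWalk pos neg u w s n) : s = xor (c u) (c w) := by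
  induction h with
  | nil u => exact (Bool.xor_self _).symm
  | consPos huv _ ih => rw [ih, hpos _ _ huv]
  | @consNeg u v _ _ _ huv _ ih =>
    rw [ih, Bool.eq_not_of_ne (hneg _ _ huv), Bool.not_xor]

theorem Relation.TransGen.exists_sWalk {α : Type*} {pos neg : α → α → Prop} {u w : α}
    (h : Relation.TransGen (fun a b => pos a b ∨ neg a b) u w) :
    ∃ s n, n ≠ 0 ∧ SWalk pos neg u w s n := by
  induction h using Relation.TransGen.head_induction_on with
  | single huw =>
    rcases huw with huw | huw
    · exact ⟨_, 1, one_ne_zero, .consPos huw (.nil w)⟩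
    · exact ⟨_, 1, one_ne_zero, .consNeg huw (.nil w)⟩
  | head huv _ ih =>
    obtain ⟨s, n, -, hw⟩ := ih
    rcases huv with huv | huv
    · exact ⟨_, n + 1, n.succ_ne_zero, .consPos huv hw⟩
    · exact ⟨_, n + 1, n.succ_ne_zero, .consNeg huv hw⟩

theorem Finite.exists_transGen_self {α : Type*} [Finite α] {r : α → α → Prop} {S : Set α}
    (hS : S.Nonempty) (hpred : ∀ v ∈ S, ∃ u ∈ S, r u v) : ∃ u, Relation.TransGen r u u := by
  by_contra! hacyclic
  have : Std.Irrefl (Relation.TransGen r) := ⟨hacyclic⟩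
  have hwf : WellFounded r :=
    Subrelation.wf Relation.TransGen.single (Finite.wellFounded_of_trans_of_irrefl _)
  obtain ⟨m, hmS, hmin⟩ := hwf.has_min S hS
  obtain ⟨u, huS, hum⟩ := hpred m hmS
  exact hmin u huS hum

theorem isStable.exists_rule_of_eq_true {V : Type*} {P : Finset (Rule V)} {x : V → Bool}
    (hx : isStable P x) {v : V} (hv : x v = true) : ∃ r ∈ P, r.head = v ∧ bodySat r x := by
  classical
  by_contra! hunsupported
  -- Without a supporting rule, `v` can be dropped from `x` and still leave a model of `P^x`.
  have hmodel : modelsReduct P x (Function.update x v false) := by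
    intro r hr hneg hpos
    have hpos' : ∀ p ∈ r.pbody, x p = true := fun p hp => by
      by_cases hpv : p = v
      · rw [hpv, hv]
      · simpa [Function.update_of_ne hpv] using hpos p hp
    by_cases hhead : r.head = v
    · exact (hunsupported r hr hhead ⟨hpos', hneg⟩).elim
    · rw [Function.update_of_ne hhead]
      exact hx.1 r hr hneg hpos'
  simpa using hx.2 _ hmodel v hv

theorem isStable.exists_differing_pred_of_true_false {V : Type*} {P : Finset (Rule V)}
    {A B : V → Bool} (hA : isStable P A) (hB : isStable P B) {v : V} (hAv : A v = true)
    (hBv : B v = false) :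
    ∃ u, A u ≠ B u ∧ (posDG P u v ∧ A u = A v ∨ negDG P u v ∧ A u ≠ A v) := by
  obtain ⟨r, hr, rfl, hposA, hnegA⟩ := hA.exists_rule_of_eq_true hAv
  have hnotB : ¬ bodySat r B := fun ⟨hposB, hnegB⟩ => by
    simp [hB.1 r hr hnegB hposB] at hBv
  simp only [bodySat, not_and_or, not_forall, Bool.not_eq_true, Bool.not_eq_false,
    exists_prop] at hnotB
  rcases hnotB with ⟨p, hp, hBp⟩ | ⟨p, hp, hBp⟩
  · exact ⟨p, by simp [hposA p hp, hBp], .inl ⟨⟨r, hr, rfl, hp⟩, by rw [hposA p hp, hAv]⟩⟩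
  · exact ⟨p, by simp [hnegA p hp, hBp], .inr ⟨⟨r, hr, rfl, hp⟩, by simp [hnegA p hp, hAv]⟩⟩

theorem isStable.exists_differing_pred {V : Type*} {P : Finset (Rule V)} {A B : V → Bool}
    (hA : isStable P A) (hB : isStable P B) {v : V} (hv : A v ≠ B v) :
    ∃ u, A u ≠ B u ∧ (posDG P u v ∧ A u = A v ∨ negDG P u v ∧ A u ≠ A v) := by
  by_cases hAv : A v = true
  · exact hA.exists_differing_pred_of_true_false hB hAv (by simpa [hAv] using hv.symm)
  · obtain ⟨u, hu, hpred⟩ := hB.exists_differing_pred_of_true_false hA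
      (by simpa [hAv] using hv.symm) (by simpa using hAv)
    have hswap : B u = B v ↔ A u = A v := by
      rw [Bool.eq_not_of_ne hu, Bool.eq_not_of_ne hv.symm, Bool.not_inj_iff]
    exact ⟨u, hu.symm, by simpa only [ne_eq, hswap] using hpred⟩

theorem stmt6_general {V : Type*} [Fintype V] (P : Finset (Rule V))
    (A B : V → Bool) (hA : isStable P A) (hB : isStable P B) (hAB : A ≠ B) :
    ∃ (u : V) (n : ℕ), n ≠ 0 ∧
      SWalk (fun a b => posDG P a b ∧ A a ≠ B a ∧ A b ≠ B b)
            (fun a b => negDG P a b ∧ A a ≠ B a ∧ A b ≠ B b) u u false n := by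
  let pos₀ a b := (posDG P a b ∧ A a ≠ B a ∧ A b ≠ B b) ∧ A a = A b
  let neg₀ a b := (negDG P a b ∧ A a ≠ B a ∧ A b ≠ B b) ∧ A a ≠ A b
  have hpred : ∀ v ∈ {v | A v ≠ B v}, ∃ u ∈ {v | A v ≠ B v}, pos₀ u v ∨ neg₀ u v :=
    fun v hv => (hA.exists_differing_pred hB hv).imp fun u ⟨hu, harc⟩ =>
      ⟨hu, harc.imp (fun h => ⟨⟨h.1, hu, hv⟩, h.2⟩) (fun h => ⟨⟨h.1, hu, hv⟩, h.2⟩)⟩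
  obtain ⟨u, hcycle⟩ := Finite.exists_transGen_self (Function.ne_iff.mp hAB) hpred
  obtain ⟨s, n, hn, hwalk⟩ := hcycle.exists_sWalk
  have hs : s = false := by
    simpa using hwalk.sign_eq_xor A (fun _ _ h => h.2) (fun _ _ h => h.2)
  exact ⟨u, n, hn, hs ▸ hwalk.mono (fun _ _ h => h.1) (fun _ _ h => h.1)⟩

/-- if `P` has two distinct stable models `A` and `B`, then the dependence
graph of `P` has a positive cycle all of whose vertices get different truth values in
`A` and `B`. -/
theorem stmt6 {V : Type*} [DecidableEq V] [Fintype V] (P : Finset (Rule V))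
    (A B : V → Bool) (hA : isStable P A) (hB : isStable P B) (hAB : A ≠ B) :
    ∃ (u : V) (n : ℕ), n ≠ 0 ∧
      SWalk (fun a b => posDG P a b ∧ A a ≠ B a ∧ A b ≠ B b)
            (fun a b => negDG P a b ∧ A a ≠ B a ∧ A b ≠ B b) u u false n :=
  stmt6_general P A B hA hB hAB
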